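/- arXiv:1307.7365 — 3 statements merged into one kernel-verified Lean document; each statement's English description precedes it below -/
import Mathlib

section
/- Let (X,Y,U) be jointly Gaussian with correlation coefficients ρ_xy, ρ_xu, ρ_yu, and suppose the conditional mutual information constraint I(X;Y|U) ≤ R_s holds, i.e., (1/2)·log[((1-ρ_xu²)(1-ρ_yu²))/(1-ρ_xy²-ρ_xu²-ρ_yu²+2ρ_xy·ρ_xu·ρ_yu)] ≤ R_s. Then ρ_xy² - ρ_xu² ≤ 1 - exp(-2R_s). -/
/-- For a valid jointly Gaussian correlation triple `(ρ_xy, ρ_xu, ρ_yu) = (a, b, c)`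
with positive determinant `D = 1 - a² - b² - c² + 2abc`, if the Gaussian conditional mutual
information `I(X;Y|U) = (1/2)·log[((1-b²)(1-c²))/D]` is at most `R_s`, then
`ρ_xy² - ρ_xu² ≤ 1 - exp(-2R_s)`. -/
theorem gaussian_cond_mi_key_rate_bound
    (a b c Rs : ℝ) (ha : |a| ≤ 1) (hb : |b| ≤ 1) (hc : |c| ≤ 1)
    (hD : 0 < 1 - a ^ 2 - b ^ 2 - c ^ 2 + 2 * a * b * c) (hRs : 0 ≤ Rs)
    (hcon : (1 / 2) * Real.log (((1 - b ^ 2) * (1 - c ^ 2)) /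
        (1 - a ^ 2 - b ^ 2 - c ^ 2 + 2 * a * b * c)) ≤ Rs) :
    a ^ 2 - b ^ 2 ≤ 1 - Real.exp (-2 * Rs) := by
  have ha2 : a ^ 2 ≤ 1 := by have := abs_le.mp ha; nlinarith
  have hb2 : b ^ 2 ≤ 1 := by have := abs_le.mp hb; nlinarith
  have hc2 : c ^ 2 ≤ 1 := by have := abs_le.mp hc; nlinarith
  have hDP : 1 - a ^ 2 - b ^ 2 - c ^ 2 + 2 * a * b * c
      = (1 - b ^ 2) * (1 - c ^ 2) - (a - b * c) ^ 2 := by ring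
  have hP : 0 < (1 - b ^ 2) * (1 - c ^ 2) := by nlinarith [sq_nonneg (a - b * c)]
  have hb2' : b ^ 2 < 1 := by nlinarith
  have hlog : Real.log (((1 - b ^ 2) * (1 - c ^ 2)) /
      (1 - a ^ 2 - b ^ 2 - c ^ 2 + 2 * a * b * c)) ≤ 2 * Rs := by linarith
  have hexp : ((1 - b ^ 2) * (1 - c ^ 2)) /
      (1 - a ^ 2 - b ^ 2 - c ^ 2 + 2 * a * b * c) ≤ Real.exp (2 * Rs) := by
    calc ((1 - b ^ 2) * (1 - c ^ 2)) / (1 - a ^ 2 - b ^ 2 - c ^ 2 + 2 * a * b * c)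
        = Real.exp (Real.log (((1 - b ^ 2) * (1 - c ^ 2)) /
            (1 - a ^ 2 - b ^ 2 - c ^ 2 + 2 * a * b * c))) :=
          (Real.exp_log (by positivity)).symm
      _ ≤ Real.exp (2 * Rs) := Real.exp_le_exp.mpr hlog
  have hPle : (1 - b ^ 2) * (1 - c ^ 2) ≤
      (1 - a ^ 2 - b ^ 2 - c ^ 2 + 2 * a * b * c) * Real.exp (2 * Rs) := by
    rw [div_le_iff₀ hD] at hexp; linarith
  have hL : 0 ≤ a ^ 2 * (1 - b ^ 2) + b ^ 4 := by nlinarith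
  have hkey : (a ^ 2 - b ^ 2) * ((1 - b ^ 2) * (1 - c ^ 2)) ≤ (a - b * c) ^ 2 := by
    rcases eq_or_lt_of_le hL with h0 | hpos
    · have hb20 : b ^ 2 = 0 := by
        nlinarith [mul_nonneg (sq_nonneg a) (by linarith : (0:ℝ) ≤ 1 - b ^ 2),
          sq_nonneg (b ^ 2)]
      have hb0 : b = 0 := pow_eq_zero_iff two_ne_zero |>.mp hb20
      have ha0 : a = 0 := by
        have ha20 : a ^ 2 = 0 := by rw [hb0] at h0; nlinarith
        exact pow_eq_zero_iff two_ne_zero |>.mp ha20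
      rw [hb0, ha0]; norm_num
    · have hid : ((a - b * c) ^ 2 - (a ^ 2 - b ^ 2) * ((1 - b ^ 2) * (1 - c ^ 2))) *
          (a ^ 2 * (1 - b ^ 2) + b ^ 4)
          = ((a ^ 2 * (1 - b ^ 2) + b ^ 4) * c - a * b) ^ 2
            + b ^ 2 * (1 - b ^ 2) * (a ^ 2 - b ^ 2) ^ 2 := by ring
      have hsum : 0 ≤ ((a - b * c) ^ 2 - (a ^ 2 - b ^ 2) * ((1 - b ^ 2) * (1 - c ^ 2))) *
          (a ^ 2 * (1 - b ^ 2) + b ^ 4) := by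
        rw [hid]
        have h1 : (0:ℝ) ≤ 1 - b ^ 2 := by linarith
        positivity
      have := (mul_nonneg_iff_of_pos_right hpos).mp hsum
      linarith
  have hE : Real.exp (-2 * Rs) * Real.exp (2 * Rs) = 1 := by
    rw [← Real.exp_add]; norm_num
  have he : 0 < Real.exp (-2 * Rs) := Real.exp_pos _
  have h1 : ((1 - b ^ 2) * (1 - c ^ 2)) * Real.exp (-2 * Rs) ≤
      1 - a ^ 2 - b ^ 2 - c ^ 2 + 2 * a * b * c := by
    calc ((1 - b ^ 2) * (1 - c ^ 2)) * Real.exp (-2 * Rs)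
        ≤ (1 - a ^ 2 - b ^ 2 - c ^ 2 + 2 * a * b * c) * Real.exp (2 * Rs) *
            Real.exp (-2 * Rs) := mul_le_mul_of_nonneg_right hPle he.le
      _ = (1 - a ^ 2 - b ^ 2 - c ^ 2 + 2 * a * b * c) *
            (Real.exp (-2 * Rs) * Real.exp (2 * Rs)) := by ring
      _ = 1 - a ^ 2 - b ^ 2 - c ^ 2 + 2 * a * b * c := by rw [hE, mul_one]
  have h2 : (a ^ 2 - b ^ 2) * ((1 - b ^ 2) * (1 - c ^ 2)) ≤
      (1 - Real.exp (-2 * Rs)) * ((1 - b ^ 2) * (1 - c ^ 2)) := by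
    have hr : (1 - Real.exp (-2 * Rs)) * ((1 - b ^ 2) * (1 - c ^ 2))
        = (1 - b ^ 2) * (1 - c ^ 2) - ((1 - b ^ 2) * (1 - c ^ 2)) * Real.exp (-2 * Rs) := by
      ring
    rw [hr]; linarith [hkey, h1, hDP]
  exact le_of_mul_le_mul_right h2 hP
end

section
/- Let ρ_xy, ρ_xu, ρ_yu be correlation coefficients of a jointly Gaussian triple (X,Y,U) satisfying (1/2)·log[(1-ρ_yu²)/(1-ρ_xy²-ρ_xu²-ρ_yu²+2ρ_xy·ρ_xu·ρ_yu)] ≤ R. Then ρ_xy² - ρ_xu² ≤ 1 - exp(-2R). -/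
/-- For a valid jointly Gaussian correlation triple `(ρ_xy, ρ_xu, ρ_yu) = (a, b, c)`
with positive determinant `D = 1 - a² - b² - c² + 2abc`, if the Gaussian mutual information
`I(X;U,Y) = (1/2)·log[(1-c²)/D]` is at most `R`, then `ρ_xy² - ρ_xu² ≤ 1 - exp(-2R)`. -/
theorem gaussian_mi_rate_bound
    (a b c R : ℝ) (ha : |a| ≤ 1) (hb : |b| ≤ 1) (hc : |c| ≤ 1)
    (hD : 0 < 1 - a ^ 2 - b ^ 2 - c ^ 2 + 2 * a * b * c) (hR : 0 ≤ R)
    (hcon : (1 / 2) * Real.log ((1 - c ^ 2) /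
        (1 - a ^ 2 - b ^ 2 - c ^ 2 + 2 * a * b * c)) ≤ R) :
    a ^ 2 - b ^ 2 ≤ 1 - Real.exp (-2 * R) := by
  have hc2 : (0:ℝ) < 1 - c ^ 2 := by
    nlinarith [sq_nonneg (a - b), sq_nonneg (a + b), abs_le.mp hc, abs_le.mp ha,
      abs_le.mp hb, sq_nonneg (a*b - 1), sq_nonneg (a*b + 1)]
  have h1 : (1 - c ^ 2) / (1 - a ^ 2 - b ^ 2 - c ^ 2 + 2 * a * b * c)
      ≤ Real.exp (2 * R) := by
    rw [← Real.exp_log (div_pos hc2 hD)]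
    exact Real.exp_le_exp.mpr (by linarith)
  rw [div_le_iff₀ hD] at h1
  have hmul : Real.exp (-2 * R) * Real.exp (2 * R) = 1 := by
    rw [← Real.exp_add]; norm_num
  have hE : 0 < Real.exp (-2 * R) := Real.exp_pos _
  have h2 : Real.exp (-2 * R) * (1 - c ^ 2)
      ≤ 1 - a ^ 2 - b ^ 2 - c ^ 2 + 2 * a * b * c := by
    calc Real.exp (-2 * R) * (1 - c ^ 2)
        ≤ Real.exp (-2 * R) * (Real.exp (2 * R) *
            (1 - a ^ 2 - b ^ 2 - c ^ 2 + 2 * a * b * c)) := by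
          exact mul_le_mul_of_nonneg_left h1 hE.le
      _ = 1 - a ^ 2 - b ^ 2 - c ^ 2 + 2 * a * b * c := by
          rw [← mul_assoc, hmul, one_mul]
  -- key algebraic fact: D ≤ (1 - a² + b²)(1 - c²)
  nlinarith [sq_nonneg (b - a * c), mul_nonneg (sq_nonneg b) hc2.le, h2, hc2,
    mul_le_mul_of_nonneg_left h2 (le_of_lt hc2)]
end

section
/- For jointly Gaussian (X,Y,U) subject to both constraints I(X;Y|U) ≤ R_s and I(X;U,Y) ≤ R, the maximum of ρ_xy² - ρ_xu² equals 1 - exp(-2·min(R_s, R)), and this maximum is attained by choosing U independent of (X,Y) and ρ_xy² = 1 - exp(-2·min(R_s,R)). -/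
set_option maxHeartbeats 1000000


/-- For jointly Gaussian `(X,Y,U)` with correlation triple `(a,b,c) =
(ρ_xy, ρ_xu, ρ_yu)` subject to `I(X;Y|U) = (1/2)log[((1-b²)(1-c²))/D] ≤ R_s` and
`I(X;U,Y) = (1/2)log[(1-c²)/D] ≤ R` (where `D = 1-a²-b²-c²+2abc > 0`), the maximum of
`ρ_xy² - ρ_xu²` equals `1 - exp(-2·min(R_s,R))`, attained by choosing `U` independent of
`(X,Y)` (i.e. `b = c = 0`) and `ρ_xy² = 1 - exp(-2·min(R_s,R))`. -/
theorem gaussian_max_payoff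
    (R Rs : ℝ) (hR : 0 ≤ R) (hRs : 0 ≤ Rs) :
    IsGreatest {g : ℝ | ∃ a b c : ℝ, |a| ≤ 1 ∧ |b| ≤ 1 ∧ |c| ≤ 1 ∧
        0 < 1 - a ^ 2 - b ^ 2 - c ^ 2 + 2 * a * b * c ∧
        (1 / 2) * Real.log (((1 - b ^ 2) * (1 - c ^ 2)) /
          (1 - a ^ 2 - b ^ 2 - c ^ 2 + 2 * a * b * c)) ≤ Rs ∧
        (1 / 2) * Real.log ((1 - c ^ 2) /
          (1 - a ^ 2 - b ^ 2 - c ^ 2 + 2 * a * b * c)) ≤ R ∧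
        g = a ^ 2 - b ^ 2} (1 - Real.exp (-2 * min Rs R)) ∧
    (∃ a : ℝ, |a| ≤ 1 ∧ a ^ 2 = 1 - Real.exp (-2 * min Rs R) ∧
      0 < 1 - a ^ 2 - 0 ^ 2 - 0 ^ 2 + 2 * a * 0 * 0 ∧
      (1 / 2) * Real.log (((1 - 0 ^ 2) * (1 - 0 ^ 2)) /
        (1 - a ^ 2 - 0 ^ 2 - 0 ^ 2 + 2 * a * 0 * 0)) ≤ Rs ∧
      (1 / 2) * Real.log ((1 - 0 ^ 2) /
        (1 - a ^ 2 - 0 ^ 2 - 0 ^ 2 + 2 * a * 0 * 0)) ≤ R) := by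
  set m := min Rs R with hm
  have hm0 : 0 ≤ m := le_min hRs hR
  set E := Real.exp (-2 * m) with hE
  have hE0 : 0 < E := Real.exp_pos _
  have hE1 : E ≤ 1 := by
    rw [hE]
    have : (-2 : ℝ) * m ≤ 0 := by nlinarith
    calc Real.exp (-2 * m) ≤ Real.exp 0 := Real.exp_le_exp.mpr this
      _ = 1 := Real.exp_zero
  have hlogE : Real.log E = -2 * m := Real.log_exp _
  -- witness facts
  have ha0 : (0:ℝ) ≤ 1 - E := by linarith
  set a0 := Real.sqrt (1 - E) with ha0def
  have ha0sq : a0 ^ 2 = 1 - E := Real.sq_sqrt ha0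
  have ha0abs : |a0| ≤ 1 := by
    rw [abs_of_nonneg (Real.sqrt_nonneg _)]
    have := Real.sqrt_le_sqrt (show 1 - E ≤ 1 by linarith)
    simpa using this
  have hD0 : (0:ℝ) < 1 - a0 ^ 2 - 0 ^ 2 - 0 ^ 2 + 2 * a0 * 0 * 0 := by
    rw [ha0sq]; simpa using hE0
  have hratio : ((1 - (0:ℝ) ^ 2) * (1 - 0 ^ 2)) /
      (1 - a0 ^ 2 - 0 ^ 2 - 0 ^ 2 + 2 * a0 * 0 * 0) = 1 / E := by
    rw [ha0sq]; ring_nf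
  have hlog1E : (1/2 : ℝ) * Real.log (1 / E) = m := by
    rw [Real.log_div one_ne_zero (ne_of_gt hE0), Real.log_one, hlogE]; ring
  have hcRs : (1/2 : ℝ) * Real.log (((1 - (0:ℝ) ^ 2) * (1 - 0 ^ 2)) /
      (1 - a0 ^ 2 - 0 ^ 2 - 0 ^ 2 + 2 * a0 * 0 * 0)) ≤ Rs := by
    rw [hratio, hlog1E]; exact min_le_left _ _
  have hcR : (1/2 : ℝ) * Real.log ((1 - (0:ℝ) ^ 2) /
      (1 - a0 ^ 2 - 0 ^ 2 - 0 ^ 2 + 2 * a0 * 0 * 0)) ≤ R := by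
    have : ((1 - (0:ℝ) ^ 2) / (1 - a0 ^ 2 - 0 ^ 2 - 0 ^ 2 + 2 * a0 * 0 * 0)) = 1 / E := by
      rw [ha0sq]; ring_nf
    rw [this, hlog1E]; exact min_le_right _ _
  clear_value a0 E m
  constructor
  · constructor
    · -- membership
      exact ⟨a0, 0, 0, ha0abs, by norm_num, by norm_num, hD0, hcRs, hcR, by rw [ha0sq]; ring⟩
    · -- upper bound
      rintro g ⟨a, b, c, ha, hb, hc, hD, h1, h2, rfl⟩
      clear hcRs hcR hratio hlog1E hD0 ha0abs ha0sq ha0 ha0def hlogE a0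
      have hDdef : ∃ D : ℝ, D = 1 - a ^ 2 - b ^ 2 - c ^ 2 + 2 * a * b * c := ⟨_, rfl⟩
      obtain ⟨D, hDdef⟩ := hDdef
      rw [← hDdef] at hD h1 h2
      have hb1 : b ^ 2 ≤ 1 := by nlinarith [abs_nonneg b, sq_abs b]
      have hc1 : c ^ 2 ≤ 1 := by nlinarith [abs_nonneg c, sq_abs c]
      have hkey : D = (1 - b ^ 2) * (1 - c ^ 2) - (a - b * c) ^ 2 := by rw [hDdef]; ring
      have hb1' : b ^ 2 < 1 := by
        rcases lt_or_eq_of_le hb1 with h | h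
        · exact h
        · exfalso; nlinarith [sq_nonneg (a - b * c), sq_nonneg (1 - c^2), hkey]
      have hc1' : c ^ 2 < 1 := by
        rcases lt_or_eq_of_le hc1 with h | h
        · exact h
        · exfalso; nlinarith [sq_nonneg (a - b * c), sq_nonneg (1 - b^2), hkey]
      have hbc : (0:ℝ) < (1 - b ^ 2) * (1 - c ^ 2) := by nlinarith
      -- constraint 1 gives  exp(-2Rs) * (1-b²)(1-c²) ≤ D
      have e1 : Real.exp (-2 * Rs) * ((1 - b ^ 2) * (1 - c ^ 2)) ≤ D := by
        have hx : (0:ℝ) < ((1 - b ^ 2) * (1 - c ^ 2)) / D := div_pos hbc hD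
        have : Real.log (((1 - b ^ 2) * (1 - c ^ 2)) / D) ≤ 2 * Rs := by linarith
        have hle : ((1 - b ^ 2) * (1 - c ^ 2)) / D ≤ Real.exp (2 * Rs) :=
          (Real.log_le_iff_le_exp hx).mp this
        have := (div_le_iff₀ hD).mp hle
        have hee : Real.exp (-2 * Rs) * Real.exp (2 * Rs) = 1 := by
          rw [← Real.exp_add]; norm_num
        nlinarith [Real.exp_pos (-2 * Rs), Real.exp_pos (2 * Rs)]
      have e2 : Real.exp (-2 * R) * (1 - c ^ 2) ≤ D := by
        have hx : (0:ℝ) < (1 - c ^ 2) / D := div_pos (by nlinarith) hD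
        have : Real.log ((1 - c ^ 2) / D) ≤ 2 * R := by linarith
        have hle : (1 - c ^ 2) / D ≤ Real.exp (2 * R) :=
          (Real.log_le_iff_le_exp hx).mp this
        have := (div_le_iff₀ hD).mp hle
        have hee : Real.exp (-2 * R) * Real.exp (2 * R) = 1 := by
          rw [← Real.exp_add]; norm_num
        nlinarith [Real.exp_pos (-2 * R), Real.exp_pos (2 * R)]
      -- bound via Rs
      have bRs : a ^ 2 - b ^ 2 ≤ 1 - Real.exp (-2 * Rs) := by
        rcases le_or_gt (a ^ 2) (b ^ 2) with h | h
        · have : Real.exp (-2 * Rs) ≤ 1 := by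
            calc Real.exp (-2 * Rs) ≤ Real.exp 0 := Real.exp_le_exp.mpr (by nlinarith)
              _ = 1 := Real.exp_zero
          linarith
        · -- (a²-b²)(1-b²)(1-c²) ≤ (a-bc)²
          have key : (a ^ 2 - b ^ 2) * ((1 - b ^ 2) * (1 - c ^ 2)) ≤ (a - b * c) ^ 2 := by
            nlinarith [sq_nonneg (a * c - b), sq_nonneg b, sq_nonneg (a - b * c)]
          have hD' : (a - b * c) ^ 2 ≤ (1 - Real.exp (-2 * Rs)) * ((1 - b ^ 2) * (1 - c ^ 2)) := by
            nlinarith [e1, hkey]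
          exact le_of_mul_le_mul_right (key.trans hD') hbc
      -- bound via R
      have bR : a ^ 2 - b ^ 2 ≤ 1 - Real.exp (-2 * R) := by
        have key : (a ^ 2 - b ^ 2) * (1 - c ^ 2) ≤ b ^ 2 * (1 - c ^ 2) + (a - b * c) ^ 2 := by
          nlinarith [sq_nonneg (a * c - b), sq_nonneg b]
        have hD' : (a - b * c) ^ 2 + Real.exp (-2 * R) * (1 - c ^ 2)
            ≤ (1 - b ^ 2) * (1 - c ^ 2) := by nlinarith [e2, hkey]
        have hc0 : (0:ℝ) < 1 - c ^ 2 := by linarith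
        have h3 : (a ^ 2 - b ^ 2) * (1 - c ^ 2) ≤ (1 - Real.exp (-2 * R)) * (1 - c ^ 2) := by
          nlinarith
        exact le_of_mul_le_mul_right h3 hc0
      -- combine
      have hmax : Real.exp (-2 * m) = min (Real.exp (-2 * Rs)) (Real.exp (-2 * R)) ∨
          True := Or.inr trivial
      rcases min_cases Rs R with ⟨hmeq, _⟩ | ⟨hmeq, _⟩
      · rw [hE, hm, hmeq]; exact bRs
      · rw [hE, hm, hmeq]; exact bR
  · exact ⟨a0, ha0abs, ha0sq, hD0, hcRs, hcR⟩
end
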